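/- Let Y = ΨD + W with D block P-sparse supported on Ω_T, and suppose a block-index set Ω̂ with |Ω̂| ≤ P satisfies ‖D_{Ω_T∖Ω̂}‖_F ≤ C₃‖W‖_F for some constant C₃ ≥ 0. Then the least-squares estimator D̂ (defined by D̂_{Ω̂} = Ψ_{Ω̂}^†Y, zero elsewhere) satisfies ‖D − D̂‖_F ≤ C₄‖W‖_F with C₄ = (C₃(1 − δ_P + δ_{2P}) + √(1+δ_P))/(1 − δ_P), provided Ψ satisfies the structured RIP with δ_{2P} < 1. -/

import Mathlib

/-!
Write `D - D̂ = D_miss - U`, where `D_miss` is the part of `D` on the missed blocks `Ω_T ∖ Ω̂` and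
`U = D̂ - D_{Ω̂}` is the estimation error, supported on `Ω̂`. The least-squares normal equations
`Ψ_{Ω̂}ᴴ Ψ U = Ψ_{Ω̂}ᴴ (Ψ D_miss + W)` give `‖ΨU‖² = Re⟪ΨU, Ψ D_miss⟫ + Re⟪ΨU, W⟫`. Since `U` and
`D_miss` have disjoint supports, polarization and the RIP of order `2P` bound the first term by
`δ_{2P} ‖U‖ ‖D_miss‖`; the second is at most `√(1+δ_P) ‖U‖ ‖W‖`, while `‖ΨU‖² ≥ (1-δ_P) ‖U‖²`.
Hence `(1-δ_P) ‖U‖ ≤ δ_{2P} C₃ ‖W‖ + √(1+δ_P) ‖W‖`, and the triangle inequality concludes.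
-/

open scoped BigOperators
open Matrix
noncomputable section

variable {Np M L R : ℕ}

/-- Frobenius norm of a complex matrix. -/
def frob {m n : Type*} [Fintype m] [Fintype n] (A : Matrix m n ℂ) : ℝ :=
  Real.sqrt (∑ i, ∑ j, ‖A i j‖ ^ 2)

/-- `D` is block-supported on the block-index set `Ω`. -/
def SuppOn (Ω : Finset (Fin L)) (D : Matrix (Fin L × Fin M) (Fin R) ℂ) : Prop :=
  ∀ p r, p.1 ∉ Ω → D p r = 0

/-- Column-block submatrix `Ψ_Ω` of `Ψ`. -/
def bsub (Ψ : Matrix (Fin Np) (Fin L × Fin M) ℂ) (Ω : Finset (Fin L)) :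
    Matrix (Fin Np) ({l // l ∈ Ω} × Fin M) ℂ :=
  Ψ.submatrix id (fun q => ((q.1 : Fin L), q.2))

/-- Row-block submatrix `D_Ω` of `D`. -/
def rsub (D : Matrix (Fin L × Fin M) (Fin R) ℂ) (Ω : Finset (Fin L)) :
    Matrix ({l // l ∈ Ω} × Fin M) (Fin R) ℂ :=
  D.submatrix (fun q => ((q.1 : Fin L), q.2)) id

/-- Moore–Penrose pseudoinverse `Ψ_Ω^† = (Ψ_Ωᴴ Ψ_Ω)⁻¹ Ψ_Ωᴴ` of the column-block submatrix. -/
def bpinv (Ψ : Matrix (Fin Np) (Fin L × Fin M) ℂ) (Ω : Finset (Fin L)) :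
    Matrix ({l // l ∈ Ω} × Fin M) (Fin Np) ℂ :=
  ((bsub Ψ Ω)ᴴ * bsub Ψ Ω)⁻¹ * (bsub Ψ Ω)ᴴ

/-- Re-embed a matrix indexed by the blocks of `Ω` as a full `ML × R` matrix, zero outside `Ω`. -/
def expand (Ω : Finset (Fin L)) (X : Matrix ({l // l ∈ Ω} × Fin M) (Fin R) ℂ) :
    Matrix (Fin L × Fin M) (Fin R) ℂ :=
  fun p r => if h : p.1 ∈ Ω then X (⟨p.1, h⟩, p.2) r else 0

/-- Structured (block) RIP of order `P` with constant `δ`. -/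
def SRIP (Ψ : Matrix (Fin Np) (Fin L × Fin M) ℂ) (P : ℕ) (δ : ℝ) : Prop :=
  ∀ Ω : Finset (Fin L), Ω.card ≤ P →
    ∀ D : Matrix (Fin L × Fin M) (Fin R) ℂ, SuppOn Ω D →
      (1 - δ) * frob D ^ 2 ≤ frob (Ψ * D) ^ 2 ∧ frob (Ψ * D) ^ 2 ≤ (1 + δ) * frob D ^ 2

section Frobenius

variable {α β γ : Type*} [Fintype α] [Fintype β] [Fintype γ]

def frobVec : Matrix α β ℂ ≃ₗ[ℂ] EuclideanSpace ℂ (α × β) :=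
  (LinearEquiv.curry ℂ ℂ α β).symm.trans (WithLp.linearEquiv 2 ℂ (α × β → ℂ)).symm

def frobInner (A B : Matrix α β ℂ) : ℂ := inner ℂ (frobVec A) (frobVec B)

lemma frob_eq_norm_frobVec (A : Matrix α β ℂ) : frob A = ‖frobVec A‖ := by
  rw [EuclideanSpace.norm_eq, frob, Fintype.sum_prod_type]
  rfl

lemma frob_nonneg (A : Matrix α β ℂ) : 0 ≤ frob A := Real.sqrt_nonneg _

lemma frob_eq_zero {A : Matrix α β ℂ} : frob A = 0 ↔ A = 0 := by
  rw [frob_eq_norm_frobVec, norm_eq_zero, map_eq_zero_iff _ frobVec.injective]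

lemma frob_sub_le (A B : Matrix α β ℂ) : frob (A - B) ≤ frob A + frob B := by
  simpa only [frob_eq_norm_frobVec, map_sub] using norm_sub_le _ _

lemma frob_smul (c : ℂ) (A : Matrix α β ℂ) : frob (c • A) = ‖c‖ * frob A := by
  simp only [frob_eq_norm_frobVec, map_smul, norm_smul]

lemma re_frobInner_self (A : Matrix α β ℂ) : (frobInner A A).re = frob A ^ 2 := by
  rw [frob_eq_norm_frobVec]
  exact inner_self_eq_norm_sq (𝕜 := ℂ) (frobVec A)

lemma re_frobInner_le (A B : Matrix α β ℂ) : (frobInner A B).re ≤ frob A * frob B := by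
  simp only [frob_eq_norm_frobVec]
  exact re_inner_le_norm (𝕜 := ℂ) (frobVec A) (frobVec B)

lemma frob_add_sq (A B : Matrix α β ℂ) :
    frob (A + B) ^ 2 = frob A ^ 2 + 2 * (frobInner A B).re + frob B ^ 2 := by
  simp only [frob_eq_norm_frobVec, map_add]
  exact norm_add_sq (𝕜 := ℂ) _ _

lemma frob_sub_sq (A B : Matrix α β ℂ) :
    frob (A - B) ^ 2 = frob A ^ 2 - 2 * (frobInner A B).re + frob B ^ 2 := by
  simp only [frob_eq_norm_frobVec, map_sub]
  exact norm_sub_sq (𝕜 := ℂ) _ _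

lemma frobInner_add_right (A B C : Matrix α β ℂ) :
    frobInner A (B + C) = frobInner A B + frobInner A C := by
  simp only [frobInner, map_add, inner_add_right]

lemma frobInner_smul_smul (a b : ℝ) (A B : Matrix α β ℂ) :
    frobInner ((a : ℂ) • A) ((b : ℂ) • B) = (a * b : ℝ) * frobInner A B := by
  simp only [frobInner, map_smul, inner_smul_left, inner_smul_right, Complex.conj_ofReal]
  push_cast
  ring

lemma frobInner_eq_sum (A B : Matrix α β ℂ) :
    frobInner A B = ∑ i, ∑ j, star (A i j) * B i j := by
  simp only [frobInner, PiLp.inner_apply, RCLike.inner_apply, Fintype.sum_prod_type]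
  exact Finset.sum_congr rfl fun i _ => Finset.sum_congr rfl fun j _ => mul_comm _ _

lemma frobInner_eq_trace (A B : Matrix α β ℂ) : frobInner A B = (Aᴴ * B).trace := by
  rw [frobInner_eq_sum, Finset.sum_comm]
  rfl

lemma frobInner_mul_left (C : Matrix γ α ℂ) (X : Matrix α β ℂ) (Z : Matrix γ β ℂ) :
    frobInner (C * X) Z = frobInner X (Cᴴ * Z) := by
  rw [frobInner_eq_trace, frobInner_eq_trace, conjTranspose_mul, Matrix.mul_assoc]

lemma frob_mul_sq_eq_re_frobInner {C : Matrix γ α ℂ} {X : Matrix α β ℂ} {Z : Matrix γ β ℂ}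
    (h : Cᴴ * (C * X) = Cᴴ * Z) : frob (C * X) ^ 2 = (frobInner (C * X) Z).re := by
  rw [← re_frobInner_self, frobInner_mul_left, h, ← frobInner_mul_left]

end Frobenius

lemma conjTranspose_mul_mul_pinv_sub {𝕜 m n p : Type*} [CommRing 𝕜] [StarRing 𝕜] [Fintype m]
    [Fintype n] [DecidableEq n] {A : Matrix m n 𝕜} (hA : IsUnit (Aᴴ * A)) (Y : Matrix m p 𝕜)
    (X : Matrix n p 𝕜) : Aᴴ * (A * ((Aᴴ * A)⁻¹ * Aᴴ * Y - X)) = Aᴴ * (Y - A * X) := by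
  have hG : (Aᴴ * A) * (Aᴴ * A)⁻¹ = 1 := mul_nonsing_inv _ ((isUnit_iff_isUnit_det _).mp hA)
  simp only [Matrix.mul_sub, ← Matrix.mul_assoc, hG, Matrix.one_mul]

section Blocks

variable {Ω Ω' : Finset (Fin L)} {D E : Matrix (Fin L × Fin M) (Fin R) ℂ}

lemma SuppOn.mono (hD : SuppOn Ω D) (hΩ : Ω ⊆ Ω') : SuppOn Ω' D :=
  fun p r hp => hD p r fun h => hp (hΩ h)

lemma SuppOn.add (hD : SuppOn Ω D) (hE : SuppOn Ω E) : SuppOn Ω (D + E) :=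
  fun p r hp => by simp [hD p r hp, hE p r hp]

lemma SuppOn.sub (hD : SuppOn Ω D) (hE : SuppOn Ω E) : SuppOn Ω (D - E) :=
  fun p r hp => by simp [hD p r hp, hE p r hp]

lemma SuppOn.smul (c : ℂ) (hD : SuppOn Ω D) : SuppOn Ω (c • D) :=
  fun p r hp => by simp [hD p r hp]

lemma frobInner_eq_zero_of_disjoint (hΩ : Disjoint Ω Ω') (hD : SuppOn Ω D) (hE : SuppOn Ω' E) :
    frobInner D E = 0 := by
  rw [frobInner_eq_sum]
  refine Finset.sum_eq_zero fun p _ => Finset.sum_eq_zero fun r _ => ?_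
  by_cases hp : p.1 ∈ Ω
  · simp [hE p r (Finset.disjoint_left.mp hΩ hp)]
  · simp [hD p r hp]

lemma suppOn_expand (X : Matrix ({l // l ∈ Ω} × Fin M) (Fin R) ℂ) : SuppOn Ω (expand Ω X) :=
  fun p r hp => by simp [expand, hp]

lemma sum_expand_apply {N : Type*} [AddCommMonoid N] (f : Fin L × Fin M → ℂ → N)
    (hf : ∀ p, f p 0 = 0) (X : Matrix ({l // l ∈ Ω} × Fin M) (Fin R) ℂ) (r : Fin R) :
    ∑ p, f p (expand Ω X p r) = ∑ q : {l // l ∈ Ω} × Fin M, f ((q.1 : Fin L), q.2) (X q r) := by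
  refine (Fintype.sum_of_injective (fun q => ((q.1 : Fin L), q.2))
    (Subtype.val_injective.prodMap Function.injective_id) _ _ (fun p hp => ?_) fun q => ?_).symm
  · have hpΩ : p.1 ∉ Ω := fun h => hp ⟨(⟨p.1, h⟩, p.2), rfl⟩
    simp [expand, hpΩ, hf]
  · simp [expand]

lemma frob_expand (X : Matrix ({l // l ∈ Ω} × Fin M) (Fin R) ℂ) : frob (expand Ω X) = frob X := by
  unfold frob
  congr 1
  rw [Finset.sum_comm]
  conv_rhs => rw [Finset.sum_comm]
  exact Finset.sum_congr rfl fun r _ => sum_expand_apply (fun _ z => ‖z‖ ^ 2) (by simp) X r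

lemma mul_expand (Ψ : Matrix (Fin Np) (Fin L × Fin M) ℂ)
    (X : Matrix ({l // l ∈ Ω} × Fin M) (Fin R) ℂ) : Ψ * expand Ω X = bsub Ψ Ω * X := by
  ext i r
  exact sum_expand_apply (fun p z => Ψ i p * z) (fun _ => mul_zero _) X r

lemma expand_sub (X X' : Matrix ({l // l ∈ Ω} × Fin M) (Fin R) ℂ) :
    expand Ω (X - X') = expand Ω X - expand Ω X' := by
  ext p r
  by_cases h : p.1 ∈ Ω <;> simp [expand, h]

lemma sub_expand_rsub (hD : SuppOn Ω D) (Ω' : Finset (Fin L)) :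
    D - expand Ω' (rsub D Ω') = expand (Ω \ Ω') (rsub D (Ω \ Ω')) := by
  ext p r
  by_cases h' : p.1 ∈ Ω' <;> by_cases h : p.1 ∈ Ω <;> simp [expand, rsub, h, h', hD p r]

end Blocks

namespace SRIP

variable {Ψ : Matrix (Fin Np) (Fin L × Fin M) ℂ} {P Q : ℕ} {δ δP δQ : ℝ} {Ω Ω' : Finset (Fin L)}
  {X V : Matrix (Fin L × Fin M) (Fin R) ℂ}

lemma mul_frob_nonneg (h : SRIP (R := R) Ψ P δ) (hΩ : Ω.card ≤ P) (hX : SuppOn Ω X) :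
    0 ≤ δ * frob X := by
  obtain ⟨hlow, hup⟩ := h Ω hΩ X hX
  rcases (frob_nonneg X).eq_or_lt with h0 | hpos
  · rw [← h0, mul_zero]
  · nlinarith

lemma frob_mul_le (h : SRIP (R := R) Ψ P δ) (hΩ : Ω.card ≤ P) (hX : SuppOn Ω X) :
    frob (Ψ * X) ≤ √(1 + δ) * frob X := by
  rw [← Real.sqrt_sq (frob_nonneg (Ψ * X)), ← Real.sqrt_sq (frob_nonneg X),
    ← Real.sqrt_mul' _ (sq_nonneg _)]
  exact Real.sqrt_le_sqrt (h Ω hΩ X hX).2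

lemma eq_zero_of_mul_eq_zero (h : SRIP (R := R) Ψ P δ) (hδ : δ < 1) (hΩ : Ω.card ≤ P)
    (hX : SuppOn Ω X) (hΨX : Ψ * X = 0) : X = 0 := by
  have hlow := (h Ω hΩ X hX).1
  rw [hΨX, frob_eq_zero.mpr rfl] at hlow
  exact frob_eq_zero.mp (pow_eq_zero_iff two_ne_zero |>.mp (by nlinarith [sq_nonneg (frob X)]))

open scoped ComplexOrder in
lemma isUnit_gram [NeZero R] (h : SRIP (R := R) Ψ P δ) (hδ : δ < 1) (hΩ : Ω.card ≤ P) :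
    IsUnit ((bsub Ψ Ω)ᴴ * bsub Ψ Ω) := by
  refine (PosDef.conjTranspose_mul_self _ ?_).isUnit
  refine (injective_iff_map_eq_zero (bsub Ψ Ω).mulVecLin).mpr fun z hz => ?_
  have hcol : bsub Ψ Ω * replicateCol (Fin R) z = 0 := by
    rw [← replicateCol_mulVec]
    exact replicateCol_eq_zero _ |>.mpr hz
  rw [← mul_expand] at hcol
  have := h.eq_zero_of_mul_eq_zero hδ hΩ (suppOn_expand _) hcol
  rwa [← frob_eq_zero, frob_expand, frob_eq_zero, replicateCol_eq_zero] at this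

lemma re_frobInner_mul_le_of_frob_eq (h : SRIP (R := R) Ψ P δ) (hΩΩ' : Disjoint Ω Ω')
    (hcard : (Ω ∪ Ω').card ≤ P) (hX : SuppOn Ω X) (hV : SuppOn Ω' V) (hXV : frob X = frob V) :
    (frobInner (Ψ * X) (Ψ * V)).re ≤ δ * frob X * frob V := by
  -- `X ± V` both have squared norm `2 ‖X‖²`, so the two RIP bounds differ by `4 δ ‖X‖²`
  have horth : (frobInner X V).re = 0 := by rw [frobInner_eq_zero_of_disjoint hΩΩ' hX hV]; rfl
  have hup := (h _ hcard _ ((hX.mono Finset.subset_union_left).add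
    (hV.mono Finset.subset_union_right))).2
  have hlow := (h _ hcard _ ((hX.mono Finset.subset_union_left).sub
    (hV.mono Finset.subset_union_right))).1
  rw [Matrix.mul_add, frob_add_sq, frob_add_sq, horth] at hup
  rw [Matrix.mul_sub, frob_sub_sq, frob_sub_sq, horth] at hlow
  rw [← hXV] at hup hlow ⊢
  nlinarith

lemma re_frobInner_mul_le (h : SRIP (R := R) Ψ P δ) (hΩΩ' : Disjoint Ω Ω')
    (hcard : (Ω ∪ Ω').card ≤ P) (hX : SuppOn Ω X) (hV : SuppOn Ω' V) :
    (frobInner (Ψ * X) (Ψ * V)).re ≤ δ * frob X * frob V := by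
  rcases (mul_nonneg (frob_nonneg X) (frob_nonneg V)).eq_or_lt with hXV | hXV
  · have : frobInner (Ψ * X) (Ψ * V) = 0 := by
      rcases mul_eq_zero.mp hXV.symm with hX0 | hV0
      · simp [frobInner, frob_eq_zero.mp hX0]
      · simp [frobInner, frob_eq_zero.mp hV0]
    rw [this, mul_assoc, ← hXV, mul_zero, Complex.zero_re]
  -- rescale `X` and `V` to the common norm `‖X‖ ‖V‖`
  have hscaled := h.re_frobInner_mul_le_of_frob_eq (X := ((frob V : ℂ) • X))
    (V := ((frob X : ℂ) • V)) hΩΩ' hcard (hX.smul _) (hV.smul _)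
    (by simp only [frob_smul, Complex.norm_of_nonneg (frob_nonneg _)]; ring)
  rw [Matrix.mul_smul, Matrix.mul_smul, frobInner_smul_smul, frob_smul, frob_smul,
    Complex.norm_of_nonneg (frob_nonneg _), Complex.norm_of_nonneg (frob_nonneg _),
    Complex.re_ofReal_mul] at hscaled
  nlinarith

lemma conjTranspose_mul_mul_bpinv_sub (h : SRIP (R := R) Ψ P δ) (hδ : δ < 1) (hΩ : Ω.card ≤ P)
    (Y : Matrix (Fin Np) (Fin R) ℂ) (X : Matrix ({l // l ∈ Ω} × Fin M) (Fin R) ℂ) :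
    (bsub Ψ Ω)ᴴ * (bsub Ψ Ω * (bpinv Ψ Ω * Y - X)) = (bsub Ψ Ω)ᴴ * (Y - bsub Ψ Ω * X) := by
  -- without columns the RIP does not make the Gram matrix invertible, but both sides are empty
  rcases R.eq_zero_or_pos with rfl | hR
  · ext _ r
    exact r.elim0
  have : NeZero R := ⟨hR.ne'⟩
  exact conjTranspose_mul_mul_pinv_sub (h.isUnit_gram hδ hΩ) Y X

lemma frob_le_of_normal_equations (hP : SRIP (R := R) Ψ P δP) (hQ : SRIP (R := R) Ψ Q δQ)
    (hΩΩ' : Disjoint Ω Ω') (hΩ : Ω.card ≤ P) (hcard : (Ω ∪ Ω').card ≤ Q)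
    (X : Matrix ({l // l ∈ Ω} × Fin M) (Fin R) ℂ) (hV : SuppOn Ω' V) (W : Matrix (Fin Np) (Fin R) ℂ)
    (hnormal : (bsub Ψ Ω)ᴴ * (bsub Ψ Ω * X) = (bsub Ψ Ω)ᴴ * (Ψ * V + W)) :
    (1 - δP) * frob X ≤ δQ * frob V + √(1 + δP) * frob W := by
  have hU := suppOn_expand X
  have hsq : frob (Ψ * expand Ω X) ^ 2 =
      (frobInner (Ψ * expand Ω X) (Ψ * V)).re + (frobInner (Ψ * expand Ω X) W).re := by
    rw [mul_expand, frob_mul_sq_eq_re_frobInner hnormal, frobInner_add_right, Complex.add_re]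
  have hlow := (hP Ω hΩ _ hU).1
  have hcross := hQ.re_frobInner_mul_le hΩΩ' hcard hU hV
  have hnoise : (frobInner (Ψ * expand Ω X) W).re ≤ √(1 + δP) * frob (expand Ω X) * frob W :=
    (re_frobInner_le _ _).trans
      (mul_le_mul_of_nonneg_right (hP.frob_mul_le hΩ hU) (frob_nonneg W))
  rw [frob_expand] at hlow hcross hnoise
  have hV_nonneg : 0 ≤ δQ * frob V :=
    hQ.mul_frob_nonneg ((Finset.card_le_card Finset.subset_union_right).trans hcard) hV
  rcases (frob_nonneg X).eq_or_lt with h0 | hpos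
  · rw [← h0, mul_zero]
    exact add_nonneg hV_nonneg (mul_nonneg (Real.sqrt_nonneg _) (frob_nonneg W))
  · nlinarith

end SRIP

theorem final_recovery_guarantee_general
    (Ψ : Matrix (Fin Np) (Fin L × Fin M) ℂ) (P : ℕ) (δP δ2P : ℝ)
    (hRIP_P : SRIP (R := R) Ψ P δP) (hRIP_2P : SRIP (R := R) Ψ (2 * P) δ2P)
    (hmono : δP ≤ δ2P) (hδ2P : δ2P < 1)
    (ΩT Ωhat : Finset (Fin L)) (hcT : ΩT.card ≤ P) (hchat : Ωhat.card ≤ P)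
    (D : Matrix (Fin L × Fin M) (Fin R) ℂ) (hD : SuppOn ΩT D)
    (W Y : Matrix (Fin Np) (Fin R) ℂ) (hY : Y = Ψ * D + W)
    (C₃ : ℝ)
    (hmiss : frob (rsub D (ΩT \ Ωhat)) ≤ C₃ * frob W)
    (Dhat : Matrix (Fin L × Fin M) (Fin R) ℂ)
    (hDhat : Dhat = expand Ωhat (bpinv Ψ Ωhat * Y)) :
    frob (D - Dhat) ≤
      ((C₃ * (1 - δP + δ2P) + Real.sqrt (1 + δP)) / (1 - δP)) * frob W := by
  have hden : 0 < 1 - δP := by linarith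
  set X := bpinv Ψ Ωhat * Y - rsub D Ωhat
  set Dmiss := expand (ΩT \ Ωhat) (rsub D (ΩT \ Ωhat))
  have hsplit : D - expand Ωhat (rsub D Ωhat) = Dmiss := sub_expand_rsub hD Ωhat
  have herr : D - Dhat = Dmiss - expand Ωhat X := by
    rw [hDhat, expand_sub, ← hsplit]
    abel
  have hnormal : (bsub Ψ Ωhat)ᴴ * (bsub Ψ Ωhat * X) = (bsub Ψ Ωhat)ᴴ * (Ψ * Dmiss + W) := by
    rw [hRIP_P.conjTranspose_mul_mul_bpinv_sub (by linarith) hchat, ← mul_expand, hY, ← hsplit]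
    congr 1
    rw [Matrix.mul_sub]
    abel
  have hcard : (Ωhat ∪ (ΩT \ Ωhat)).card ≤ 2 * P := by
    rw [Finset.union_sdiff_self_eq_union]
    linarith [Finset.card_union_le Ωhat ΩT]
  have hest := hRIP_P.frob_le_of_normal_equations hRIP_2P Finset.disjoint_sdiff hchat hcard X
    (suppOn_expand _) W hnormal
  have hmiss' : frob Dmiss ≤ C₃ * frob W := by rwa [frob_expand]
  have htri : frob (D - Dhat) ≤ frob Dmiss + frob X := by
    rw [herr, ← frob_expand X]
    exact frob_sub_le _ _
  rw [div_mul_eq_mul_div, le_div_iff₀ hden]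
  nlinarith [mul_le_mul_of_nonneg_left htri hden.le,
    mul_le_mul_of_nonneg_left hmiss' (by linarith : 0 ≤ 1 - δP + δ2P)]

/-- final noise-robust recovery guarantee
`‖D − D̂‖_F ≤ C₄ ‖W‖_F` with `C₄ = (C₃(1 − δ_P + δ_{2P}) + √(1+δ_P))/(1 − δ_P)`. -/
theorem final_recovery_guarantee
    (Ψ : Matrix (Fin Np) (Fin L × Fin M) ℂ) (P : ℕ) (δP δ2P : ℝ)
    (hRIP_P : SRIP (R := R) Ψ P δP) (hRIP_2P : SRIP (R := R) Ψ (2 * P) δ2P)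
    (hmono : δP ≤ δ2P) (hδ2P : δ2P < 1)
    (ΩT Ωhat : Finset (Fin L)) (hcT : ΩT.card ≤ P) (hchat : Ωhat.card ≤ P)
    (D : Matrix (Fin L × Fin M) (Fin R) ℂ) (hD : SuppOn ΩT D)
    (W Y : Matrix (Fin Np) (Fin R) ℂ) (hY : Y = Ψ * D + W)
    (C₃ : ℝ) (hC₃ : 0 ≤ C₃)
    (hmiss : frob (rsub D (ΩT \ Ωhat)) ≤ C₃ * frob W)
    (Dhat : Matrix (Fin L × Fin M) (Fin R) ℂ)
    (hDhat : Dhat = expand Ωhat (bpinv Ψ Ωhat * Y)) :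
    frob (D - Dhat) ≤
      ((C₃ * (1 - δP + δ2P) + Real.sqrt (1 + δP)) / (1 - δP)) * frob W :=
  final_recovery_guarantee_general Ψ P δP δ2P hRIP_P hRIP_2P hmono hδ2P ΩT Ωhat hcT hchat D hD W Y
    hY C₃ hmiss Dhat hDhat
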